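/- Let G be a non-abelian group. Then the full countable direct power G^∞ is not q-compact (with respect to equations with constants from G^∞). -/

import Mathlib

/-- Terms of the group language with constants from `G` and variables among `x_1,...,x_n`. -/
inductive GTerm (G : Type) (n : ℕ) where
  | var : Fin n → GTerm G n
  | const : G → GTerm G n
  | one : GTerm G n
  | mul : GTerm G n → GTerm G n → GTerm G n
  | inv : GTerm G n → GTerm G n

def GTerm.eval {G : Type} [Group G] {n : ℕ} (v : Fin n → G) : GTerm G n → G
  | .var i => v i
  | .const g => g
  | .one => 1
  | .mul t s => t.eval v * s.eval v
  | .inv t => (t.eval v)⁻¹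

def SolSet {G : Type} [Group G] {n : ℕ} (S : Set (GTerm G n × GTerm G n)) :
    Set (Fin n → G) :=
  {v | ∀ e ∈ S, e.1.eval v = e.2.eval v}

/-- A group `H` is q-compact (w.r.t. equations with constants from `H`) if whenever the
solution set of a system is contained in that of a single equation, some finite
subsystem already suffices. -/
def QCompact (H : Type) [Group H] : Prop :=
  ∀ (n : ℕ) (S : Set (GTerm H n × GTerm H n)) (e : GTerm H n × GTerm H n),
    SolSet S ⊆ SolSet {e} → ∃ S' ⊆ S, S'.Finite ∧ SolSet S' ⊆ SolSet {e}

/-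
The system `c x = x c` (`c ∈ C`) has solution set the centralizer of `C`, so q-compactness of `H`
says: if `g` lies in the double centralizer of `C`, then already in that of some finite `F ⊆ C`.
In `G^∞` with `a b ≠ b a`, the constant sequence `a` lies in the double centralizer of the
sequences `Pi.mulSingle n a`. But finitely many of these avoid some coordinate `m`, and
`Pi.mulSingle m b` commutes with all of them while not commuting with the constant `a`.
-/

def GTerm.commEq {H : Type} (c : H) : GTerm H 1 × GTerm H 1 :=
  (.mul (.const c) (.var 0), .mul (.var 0) (.const c))

theorem GTerm.mem_solSet_image_commEq {H : Type} [Group H] {C : Set H} {v : Fin 1 → H} :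
    v ∈ SolSet (GTerm.commEq '' C) ↔ v 0 ∈ Set.centralizer C := by
  simp [SolSet, GTerm.commEq, GTerm.eval, Set.mem_centralizer_iff]

theorem solSet_anti {H : Type} [Group H] {n : ℕ} {S T : Set (GTerm H n × GTerm H n)}
    (h : S ⊆ T) : SolSet T ⊆ SolSet S :=
  fun _ hv e he => hv e (h he)

theorem GTerm.commEq_injective {H : Type} : Function.Injective (GTerm.commEq (H := H)) := by
  intro c d h
  simpa [GTerm.commEq] using h

theorem QCompact.exists_finite_mem_centralizer_centralizer {H : Type} [Group H]
    (hH : QCompact H) {C : Set H} {g : H}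
    (hg : g ∈ Set.centralizer (Set.centralizer C)) :
    ∃ F ⊆ C, F.Finite ∧ g ∈ Set.centralizer (Set.centralizer F) := by
  have hsys : SolSet (GTerm.commEq '' C) ⊆ SolSet (GTerm.commEq '' {g}) := by
    intro v hv
    rw [GTerm.mem_solSet_image_commEq] at hv ⊢
    rintro _ rfl
    exact (hg _ hv).symm
  rw [Set.image_singleton] at hsys
  obtain ⟨S', hS', hfin, hsol⟩ := hH 1 _ _ hsys
  set F := C ∩ GTerm.commEq ⁻¹' S'
  have hS'F : S' ⊆ GTerm.commEq '' F := by
    intro e he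
    obtain ⟨c, hc, rfl⟩ := hS' he
    exact ⟨c, ⟨hc, he⟩, rfl⟩
  refine ⟨F, Set.inter_subset_left,
    (hfin.preimage GTerm.commEq_injective.injOn).inter_of_right C, fun x hx => ?_⟩
  have hxF : (fun _ => x) ∈ SolSet (GTerm.commEq '' F) := GTerm.mem_solSet_image_commEq.2 hx
  have hgx := hsol (solSet_anti hS'F hxF)
  rw [← Set.image_singleton, GTerm.mem_solSet_image_commEq] at hgx
  exact (hgx g rfl).symm

namespace Pi

variable {ι : Type} [DecidableEq ι] {G : Type} [Group G]

theorem mulSingle_left_injective {a : G} (ha : a ≠ 1) :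
    Function.Injective fun i : ι => mulSingle i a := by
  intro i j h
  by_contra hij
  simpa [mulSingle_eq_of_ne hij, ha] using congrFun h i

theorem const_mem_centralizer_centralizer_range_mulSingle (a : G) :
    Function.const ι a ∈ Set.centralizer (Set.centralizer (Set.range fun i => mulSingle i a)) := by
  intro x hx
  funext i
  simpa using (congrFun (hx _ ⟨i, rfl⟩) i).symm

theorem const_notMem_centralizer_centralizer_of_finite [Infinite ι] {a b : G}
    (hab : a * b ≠ b * a) {F : Set (ι → G)} (hF : F ⊆ Set.range fun i => mulSingle i a)
    (hFfin : F.Finite) : Function.const ι a ∉ Set.centralizer (Set.centralizer F) := by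
  have ha : a ≠ 1 := by
    rintro rfl
    simp at hab
  obtain ⟨_, ⟨m, rfl⟩, hm⟩ :=
    ((Set.infinite_range_of_injective (mulSingle_left_injective ha)).sdiff hFfin).nonempty
  have hb : mulSingle m b ∈ Set.centralizer F := by
    intro _ hc
    obtain ⟨n, rfl⟩ := hF hc
    exact mulSingle_commute (f := fun _ => G) (fun hnm : n = m => hm (hnm ▸ hc)) a b
  intro h
  exact hab (by simpa using (congrFun (h _ hb) m).symm)

end Pi

theorem not_qCompact_pi (ι : Type) [Infinite ι] {G : Type} [Group G] {a b : G}
    (hab : a * b ≠ b * a) : ¬ QCompact (ι → G) := by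
  classical
  intro hq
  obtain ⟨F, hF, hFfin, hmem⟩ := hq.exists_finite_mem_centralizer_centralizer
    (Pi.const_mem_centralizer_centralizer_range_mulSingle (ι := ι) a)
  exact Pi.const_notMem_centralizer_centralizer_of_finite hab hF hFfin hmem

/-- For a non-abelian group `G`, the full countable direct power `G^∞` is not
q-compact with respect to equations with constants from `G^∞`. -/
theorem full_power_not_qcompact {G : Type} [Group G]
    (hna : ∃ a b : G, a * b ≠ b * a) :
    ¬ QCompact (ℕ → G) := by
  obtain ⟨a, b, hab⟩ := hna
  exact not_qCompact_pi ℕ hab
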